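/- arXiv:1211.4806 — 4 statements merged into one kernel-verified Lean document; each statement's English description precedes it below -/
import Mathlib

section
/- For positive integers m, n, m', n', the intersection of the subgroups (m/n)ℤ and (m'/n')ℤ of ℚ equals (lcm(m,m')/gcd(n,n'))ℤ. -/
/-!
Since `m` and `n` are coprime, a rational `x` lies in `(m/n)ℤ` exactly when `m` divides the
numerator of `x` and the denominator of `x` divides `n`: from `x * n = a * m` the coprimality of
`m, n` and of the numerator and denominator of `x` give both divisibilities. Intersecting two
such conditions yields `lcm(m, m') ∣ num x` and `den x ∣ gcd(n, n')`, which is the same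
description of `(lcm(m,m')/gcd(n,n'))ℤ`, as `lcm(m, m')` is coprime to `gcd(n, n')`.
-/

theorem Rat.mem_zmultiples_natCast_div_iff {m n : ℕ} (hn : 0 < n) (hmn : m.Coprime n) (x : ℚ) :
    x ∈ AddSubgroup.zmultiples ((m : ℚ) / n) ↔ m ∣ x.num.natAbs ∧ x.den ∣ n := by
  simp only [AddSubgroup.mem_zmultiples_iff, zsmul_eq_mul]
  constructor
  · rintro ⟨a, ha⟩
    have hx : x.num * n = a * m * x.den := by
      have : (x.num : ℚ) * n = a * m * x.den := by
        rw [← Rat.mul_den_eq_num, ← ha]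
        field_simp
      exact_mod_cast this
    have hx' : x.num.natAbs * n = a.natAbs * m * x.den := by
      simpa [Int.natAbs_mul] using congrArg Int.natAbs hx
    exact ⟨hmn.dvd_of_dvd_mul_right ⟨a.natAbs * x.den, by rw [hx']; ring⟩,
      x.reduced.symm.dvd_of_dvd_mul_left ⟨a.natAbs * m, by rw [hx']; ring⟩⟩
  · rintro ⟨hm, v, rfl⟩
    obtain ⟨u, hu⟩ := Int.natCast_dvd.mpr hm
    refine ⟨u * v, ?_⟩
    have hv : (v : ℚ) ≠ 0 := Nat.cast_ne_zero.mpr (Nat.pos_of_mul_pos_left hn).ne'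
    calc ((u * v : ℤ) : ℚ) * (m / (x.den * v : ℕ)) = (m * u : ℤ) / x.den := by
          push_cast; field_simp
      _ = x := by rw [← hu, Rat.num_div_den]

theorem stmt4_general (m n m' n' : ℕ) (hn : 0 < n) (hn' : 0 < n')
    (h : Nat.Coprime m n) (h' : Nat.Coprime m' n') :
    AddSubgroup.zmultiples ((m : ℚ) / (n : ℚ)) ⊓ AddSubgroup.zmultiples ((m' : ℚ) / (n' : ℚ))
      = AddSubgroup.zmultiples ((Nat.lcm m m' : ℚ) / (Nat.gcd n n' : ℚ)) := by
  have hcop : (Nat.lcm m m').Coprime (Nat.gcd n n') :=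
    (Nat.Coprime.mul_left (h.coprime_dvd_right (Nat.gcd_dvd_left n n'))
      (h'.coprime_dvd_right (Nat.gcd_dvd_right n n'))).coprime_dvd_left (Nat.lcm_dvd_mul m m')
  ext x
  rw [AddSubgroup.mem_inf, Rat.mem_zmultiples_natCast_div_iff hn h,
    Rat.mem_zmultiples_natCast_div_iff hn' h',
    Rat.mem_zmultiples_natCast_div_iff (Nat.gcd_pos_of_pos_left n' hn) hcop,
    Nat.lcm_dvd_iff, Nat.dvd_gcd_iff]
  tauto

/-- for positive integers `m, n, m', n'` with `gcd(m,n) = 1` and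
`gcd(m',n') = 1`, the intersection of the subgroups `(m/n)ℤ` and `(m'/n')ℤ` of `ℚ`
equals `(lcm(m,m')/gcd(n,n'))ℤ`. -/
theorem stmt4 (m n m' n' : ℕ) (hm : 0 < m) (hn : 0 < n) (hm' : 0 < m') (hn' : 0 < n')
    (h : Nat.Coprime m n) (h' : Nat.Coprime m' n') :
    AddSubgroup.zmultiples ((m : ℚ) / (n : ℚ)) ⊓ AddSubgroup.zmultiples ((m' : ℚ) / (n' : ℚ))
      = AddSubgroup.zmultiples ((Nat.lcm m m' : ℚ) / (Nat.gcd n n' : ℚ)) :=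
  stmt4_general m n m' n' hn hn' h h'
end

section
/- If s_1, s_2 are positive integers, s = s_1 s_2, and the map U ↦ sU is a well-defined bijection of 𝒰 onto itself, then the maps U ↦ s_1 U and U ↦ s_2 U are also well-defined bijections of 𝒰 onto itself. -/
/-- `a_{-1} a_{-2} ⋯ a_{-k}`. -/
def prodNeg (a : ℤ → ℤ) (k : ℕ) : ℤ := ∏ i ∈ Finset.range k, a (-(i : ℤ) - 1)

/-- `a_0 a_1 ⋯ a_{j-1}`. -/
def prodPos (a : ℤ → ℤ) (j : ℕ) : ℤ := ∏ i ∈ Finset.range j, a (i : ℤ)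

/-- The family `𝒰` of subgroups `(m/n)ℤ` of `ℚ`, where `m` divides `a_0⋯a_j` for some
`j ≥ 0` and `n` divides `a_{-1}⋯a_{-k}` for some `k ≥ 1`. -/
def Ufam (a : ℤ → ℤ) : Set (AddSubgroup ℚ) :=
  {U | ∃ m n : ℕ, 0 < m ∧ 0 < n ∧ (∃ j : ℕ, (m : ℤ) ∣ prodPos a (j + 1)) ∧
    (∃ k : ℕ, 1 ≤ k ∧ (n : ℤ) ∣ prodNeg a k) ∧
    U = AddSubgroup.zmultiples ((m : ℚ) / (n : ℚ))}


/-- Multiplication of a subgroup of `ℚ` by a rational number `s`: the image `sU`. -/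
def smulSub (s : ℚ) (U : AddSubgroup ℚ) : AddSubgroup ℚ :=
  U.map (DistribMulAction.toAddMonoidHom ℚ s)

/-! `U ↦ tU` permutes `{(m/n)ℤ | m ∈ N, n ∈ D}` exactly when `tN ⊆ N` and `tD ⊆ D`: apply the map
to `mℤ` and its inverse to `(1/n)ℤ`. When `N` and `D` are closed under taking divisors, this
condition passes from `s` to every divisor of `s`. -/

open AddSubgroup

lemma smulSub_zmultiples (s q : ℚ) : smulSub s (zmultiples q) = zmultiples (s * q) := by
  rw [smulSub, AddMonoidHom.map_zmultiples]
  rfl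

lemma smulSub_injective {s : ℚ} (hs : s ≠ 0) : Function.Injective (smulSub s) :=
  map_injective (mul_right_injective₀ hs)

lemma zmultiples_inj_of_pos {q r : ℚ} (hq : 0 < q) (hr : 0 < r) :
    zmultiples q = zmultiples r ↔ q = r := by
  rw [zmultiples_eq_zmultiples_iff (not_isOfFinAddOrder_of_isAddTorsionFree hq.ne')]
  constructor
  · rintro (h | h)
    · exact h
    · linarith
  · exact Or.inl

def fracFamily (N D : Set ℕ) : Set (AddSubgroup ℚ) :=
  {U | ∃ m ∈ N, ∃ n ∈ D, U = zmultiples ((m : ℚ) / n)}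

def DvdClosed (S : Set ℕ) : Prop := ∀ m ∈ S, ∀ d, d ∣ m → d ∈ S

lemma pos_of_mem_of_zero_not_mem {S : Set ℕ} (h0 : 0 ∉ S) {m : ℕ} (hm : m ∈ S) : 0 < m :=
  Nat.pos_of_ne_zero (ne_of_mem_of_not_mem hm h0)

lemma DvdClosed.mul_mem_of_dvd {S : Set ℕ} (hS : DvdClosed S) {s t : ℕ} (hts : t ∣ s)
    (hs : ∀ m ∈ S, s * m ∈ S) : ∀ m ∈ S, t * m ∈ S :=
  fun m hm => hS _ (hs m hm) _ (mul_dvd_mul_right hts m)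

section fracFamily

variable {N D : Set ℕ}

lemma mul_mem_of_mapsTo (hN0 : 0 ∉ N) (hD0 : 0 ∉ D) (hD1 : 1 ∈ D) (hN : DvdClosed N)
    {s : ℕ} (hs : 0 < s) (hmaps : Set.MapsTo (smulSub s) (fracFamily N D) (fracFamily N D))
    {m : ℕ} (hm : m ∈ N) : s * m ∈ N := by
  obtain ⟨m', hm', n', hn', hEq⟩ := hmaps ⟨m, hm, 1, hD1, rfl⟩
  have hm0 : 0 < m := pos_of_mem_of_zero_not_mem hN0 hm
  have hm'0 : 0 < m' := pos_of_mem_of_zero_not_mem hN0 hm'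
  have hn'0 : 0 < n' := pos_of_mem_of_zero_not_mem hD0 hn'
  rw [smulSub_zmultiples, zmultiples_inj_of_pos (by positivity) (by positivity)] at hEq
  have hm'_eq : (m' : ℚ) = s * m * n' := by
    field_simp at hEq
    push_cast at hEq
    linarith
  exact hN _ hm' _ ⟨n', by exact_mod_cast hm'_eq⟩

lemma mul_mem_of_surjOn (hN0 : 0 ∉ N) (hD0 : 0 ∉ D) (hN1 : 1 ∈ N) (hD : DvdClosed D)
    {s : ℕ} (hs : 0 < s) (hsurj : Set.SurjOn (smulSub s) (fracFamily N D) (fracFamily N D))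
    {n : ℕ} (hn : n ∈ D) : s * n ∈ D := by
  obtain ⟨_, ⟨m', hm', n', hn', rfl⟩, hEq⟩ := hsurj ⟨1, hN1, n, hn, rfl⟩
  have hn0 : 0 < n := pos_of_mem_of_zero_not_mem hD0 hn
  have hm'0 : 0 < m' := pos_of_mem_of_zero_not_mem hN0 hm'
  have hn'0 : 0 < n' := pos_of_mem_of_zero_not_mem hD0 hn'
  rw [smulSub_zmultiples, zmultiples_inj_of_pos (by positivity) (by positivity)] at hEq
  have hn'_eq : (n' : ℚ) = s * n * m' := by
    field_simp at hEq
    push_cast at hEq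
    linarith
  exact hD _ hn' _ ⟨m', by exact_mod_cast hn'_eq⟩

lemma bijOn_smulSub_of_mul_mem (hD0 : 0 ∉ D) {t : ℕ} (ht : 0 < t)
    (hN : ∀ m ∈ N, t * m ∈ N) (hD : ∀ n ∈ D, t * n ∈ D) :
    Set.BijOn (smulSub t) (fracFamily N D) (fracFamily N D) := by
  have ht0 : (t : ℚ) ≠ 0 := by positivity
  refine ⟨?_, (smulSub_injective ht0).injOn, ?_⟩
  · rintro _ ⟨m, hm, n, hn, rfl⟩
    refine ⟨t * m, hN m hm, n, hn, ?_⟩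
    rw [smulSub_zmultiples, Nat.cast_mul, mul_div_assoc]
  · rintro _ ⟨m, hm, n, hn, rfl⟩
    have hn0 : (n : ℚ) ≠ 0 := by exact_mod_cast ne_of_mem_of_not_mem hn hD0
    refine ⟨_, ⟨m, hm, t * n, hD n hn, rfl⟩, ?_⟩
    rw [smulSub_zmultiples]
    push_cast
    field_simp

theorem bijOn_smulSub_fracFamily_iff (hN0 : 0 ∉ N) (hD0 : 0 ∉ D) (hN1 : 1 ∈ N) (hD1 : 1 ∈ D)
    (hN : DvdClosed N) (hD : DvdClosed D) {s : ℕ} (hs : 0 < s) :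
    Set.BijOn (smulSub s) (fracFamily N D) (fracFamily N D) ↔
      (∀ m ∈ N, s * m ∈ N) ∧ ∀ n ∈ D, s * n ∈ D :=
  ⟨fun h => ⟨fun _ => mul_mem_of_mapsTo hN0 hD0 hD1 hN hs h.mapsTo,
      fun _ => mul_mem_of_surjOn hN0 hD0 hN1 hD hs h.surjOn⟩,
    fun h => bijOn_smulSub_of_mul_mem hD0 hs h.1 h.2⟩

end fracFamily

def numerators (a : ℤ → ℤ) : Set ℕ := {m | 0 < m ∧ ∃ j : ℕ, (m : ℤ) ∣ prodPos a (j + 1)}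

def denominators (a : ℤ → ℤ) : Set ℕ := {n | 0 < n ∧ ∃ k : ℕ, 1 ≤ k ∧ (n : ℤ) ∣ prodNeg a k}

lemma Ufam_eq_fracFamily (a : ℤ → ℤ) : Ufam a = fracFamily (numerators a) (denominators a) := by
  ext U
  constructor
  · rintro ⟨m, n, hm, hn, hmj, hnk, rfl⟩
    exact ⟨m, ⟨hm, hmj⟩, n, ⟨hn, hnk⟩, rfl⟩
  · rintro ⟨m, ⟨hm, hmj⟩, n, ⟨hn, hnk⟩, rfl⟩
    exact ⟨m, n, hm, hn, hmj, hnk, rfl⟩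

lemma one_mem_numerators (a : ℤ → ℤ) : 1 ∈ numerators a := ⟨one_pos, 0, one_dvd _⟩

lemma one_mem_denominators (a : ℤ → ℤ) : 1 ∈ denominators a := ⟨one_pos, 1, le_rfl, one_dvd _⟩

lemma dvdClosed_numerators (a : ℤ → ℤ) : DvdClosed (numerators a) :=
  fun _ ⟨hm, j, hj⟩ _ hd =>
    ⟨Nat.pos_of_dvd_of_pos hd hm, j, (Int.natCast_dvd_natCast.2 hd).trans hj⟩

lemma dvdClosed_denominators (a : ℤ → ℤ) : DvdClosed (denominators a) :=
  fun _ ⟨hn, k, hk, hnk⟩ _ hd =>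
    ⟨Nat.pos_of_dvd_of_pos hd hn, k, hk, (Int.natCast_dvd_natCast.2 hd).trans hnk⟩

theorem bijOn_smulSub_Ufam_iff (a : ℤ → ℤ) {s : ℕ} (hs : 0 < s) :
    Set.BijOn (smulSub s) (Ufam a) (Ufam a) ↔
      (∀ m ∈ numerators a, s * m ∈ numerators a) ∧
        ∀ n ∈ denominators a, s * n ∈ denominators a := by
  rw [Ufam_eq_fracFamily]
  exact bijOn_smulSub_fracFamily_iff (fun h => h.1.false) (fun h => h.1.false)
    (one_mem_numerators a) (one_mem_denominators a) (dvdClosed_numerators a)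
    (dvdClosed_denominators a) hs

theorem stmt6_general (a : ℤ → ℤ) (s₁ s₂ : ℕ) (hs₁ : 0 < s₁) (hs₂ : 0 < s₂)
    (hbij : Set.BijOn (fun U => smulSub ((s₁ * s₂ : ℕ) : ℚ) U) (Ufam a) (Ufam a)) :
    Set.BijOn (fun U => smulSub ((s₁ : ℕ) : ℚ) U) (Ufam a) (Ufam a) ∧
    Set.BijOn (fun U => smulSub ((s₂ : ℕ) : ℚ) U) (Ufam a) (Ufam a) := by
  obtain ⟨hN, hD⟩ := (bijOn_smulSub_Ufam_iff a (Nat.mul_pos hs₁ hs₂)).1 hbij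
  have of_dvd {t : ℕ} (ht : 0 < t) (hdvd : t ∣ s₁ * s₂) :
      Set.BijOn (smulSub t) (Ufam a) (Ufam a) :=
    (bijOn_smulSub_Ufam_iff a ht).2
      ⟨(dvdClosed_numerators a).mul_mem_of_dvd hdvd hN,
        (dvdClosed_denominators a).mul_mem_of_dvd hdvd hD⟩
  exact ⟨of_dvd hs₁ (dvd_mul_right s₁ s₂), of_dvd hs₂ (dvd_mul_left s₂ s₁)⟩

/-- if `s = s₁s₂` with `s₁, s₂` positive integers and `U ↦ sU` is a
well-defined bijection of `𝒰` onto itself, then so are `U ↦ s₁U` and `U ↦ s₂U`. -/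
theorem stmt6 (a : ℤ → ℤ) (ha : ∀ i, 2 ≤ a i) (s₁ s₂ : ℕ) (hs₁ : 0 < s₁) (hs₂ : 0 < s₂)
    (hbij : Set.BijOn (fun U => smulSub ((s₁ * s₂ : ℕ) : ℚ) U) (Ufam a) (Ufam a)) :
    Set.BijOn (fun U => smulSub ((s₁ : ℕ) : ℚ) U) (Ufam a) (Ufam a) ∧
    Set.BijOn (fun U => smulSub ((s₂ : ℕ) : ℚ) U) (Ufam a) (Ufam a) :=
  stmt6_general a s₁ s₂ hs₁ hs₂ hbij
end

section
/- For x ∈ Ω and y ∈ Ω*, the sequence z_j = exp(2πi x^{(j)} y^{(j)} / a_0) is eventually constant, where x^{(j)} and y^{(j)} denote the j-th truncations (finite partial sums) of x and y. -/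
/-- The reflected sequence `a*`, with `a*_i = a_{-i}`. -/
def astar (a : ℤ → ℤ) : ℤ → ℤ := fun i => a (-i)

/-- The weight of the digit in position `i` of an `a`-adic number:
`a_0⋯a_{i-1}` for `i ≥ 0`, and `1/(a_{-1}⋯a_i)` for `i < 0`. -/
def weight (a : ℤ → ℤ) (i : ℤ) : ℚ :=
  if 0 ≤ i then ((prodPos a i.toNat : ℤ) : ℚ) else (((prodNeg a (-i).toNat : ℤ) : ℚ))⁻¹

/-- The `j`-th truncation `x^{(j)} ∈ ℚ` of an `a`-adic number given by its digit
sequence `x : ℤ → ℤ` (a finite sum since the digits vanish below some index). -/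
noncomputable def trunc (a : ℤ → ℤ) (x : ℤ → ℤ) (j : ℕ) : ℚ :=
  ∑ᶠ i : ℤ, if i ≤ (j : ℤ) then (x i : ℚ) * weight a i else 0

@[simp]
lemma astar_astar (a : ℤ → ℤ) : astar (astar a) = a := by
  funext i
  simp [astar]

lemma prodNeg_ne_zero {a : ℤ → ℤ} (ha : ∀ i, a i ≠ 0) (k : ℕ) : prodNeg a k ≠ 0 :=
  Finset.prod_ne_zero_iff.mpr fun _ _ => ha _

lemma prodNeg_dvd_prodNeg (a : ℤ → ℤ) {k K : ℕ} (h : k ≤ K) : prodNeg a k ∣ prodNeg a K :=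
  Finset.prod_dvd_prod_of_subset _ _ _ (Finset.range_subset_range.mpr h)

lemma prodPos_succ (a : ℤ → ℤ) (j : ℕ) : prodPos a (j + 1) = a 0 * prodNeg (astar a) j := by
  rw [prodPos, Finset.prod_range_succ', mul_comm, prodNeg]
  congr 1
  refine Finset.prod_congr rfl fun i _ => ?_
  simp only [astar]
  congr 1
  push_cast
  ring

lemma weight_natCast_succ (a : ℤ → ℤ) (j : ℕ) :
    weight a ((j : ℤ) + 1) = ((a 0 * prodNeg (astar a) j : ℤ) : ℚ) := by
  rw [weight, if_pos (by omega), ← prodPos_succ]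
  congr

lemma exists_int_prodNeg_mul_weight {a : ℤ → ℤ} (ha : ∀ i, a i ≠ 0) {K : ℕ} {i : ℤ}
    (hi : -(K : ℤ) ≤ i) : ∃ n : ℤ, (prodNeg a K : ℚ) * weight a i = n := by
  rw [weight]
  split_ifs with h
  · exact ⟨prodNeg a K * prodPos a i.toNat, by push_cast; ring⟩
  · obtain ⟨c, hc⟩ := prodNeg_dvd_prodNeg a (show (-i).toNat ≤ K by omega)
    have hne : (prodNeg a (-i).toNat : ℚ) ≠ 0 := by exact_mod_cast prodNeg_ne_zero ha _
    exact ⟨c, by rw [hc]; push_cast; field_simp⟩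

lemma trunc_eq_sum_Icc (a z : ℤ → ℤ) {m : ℤ} (hz : ∀ i < m, z i = 0) (j : ℕ) :
    trunc a z j = ∑ i ∈ Finset.Icc m j, (z i : ℚ) * weight a i := by
  rw [trunc, finsum_eq_finsetSum_of_support_subset (s := Finset.Icc m j)]
  · exact Finset.sum_congr rfl fun i hi => if_pos (Finset.mem_Icc.mp hi).2
  · intro i hi
    by_cases hij : i ≤ (j : ℤ)
    · by_cases hmi : m ≤ i
      · simp [hmi, hij]
      · simp [hij, hz i (not_le.mp hmi)] at hi
    · simp [hij] at hi

lemma trunc_succ (a z : ℤ → ℤ) {K : ℕ} (hz : ∀ i < -(K : ℤ), z i = 0) (j : ℕ) :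
    trunc a z (j + 1) = trunc a z j + z ((j : ℤ) + 1) * weight a ((j : ℤ) + 1) := by
  have hIcc : Finset.Icc (-(K : ℤ)) ((j + 1 : ℕ) : ℤ)
      = insert ((j : ℤ) + 1) (Finset.Icc (-(K : ℤ)) j) := by
    ext i
    simp only [Finset.mem_Icc, Finset.mem_insert]
    omega
  rw [trunc_eq_sum_Icc a z hz, trunc_eq_sum_Icc a z hz, hIcc,
    Finset.sum_insert (by simp), add_comm]

lemma exists_int_prodNeg_mul_trunc {a : ℤ → ℤ} (ha : ∀ i, a i ≠ 0) (z : ℤ → ℤ) {K : ℕ}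
    (hz : ∀ i < -(K : ℤ), z i = 0) (j : ℕ) : ∃ n : ℤ, (prodNeg a K : ℚ) * trunc a z j = n := by
  suffices h : (prodNeg a K : ℚ) * trunc a z j ∈ (⊥ : Subring ℚ) by
    obtain ⟨n, hn⟩ := Subring.mem_bot.mp h
    exact ⟨n, hn.symm⟩
  rw [trunc_eq_sum_Icc a z hz, Finset.mul_sum]
  refine Subring.sum_mem _ fun i hi => ?_
  obtain ⟨n, hn⟩ := exists_int_prodNeg_mul_weight ha (Finset.mem_Icc.mp hi).1
  rw [mul_left_comm, hn, ← Int.cast_mul]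
  exact intCast_mem _ _

lemma exists_int_trunc_mul_trunc_div_succ {a : ℤ → ℤ} (ha : ∀ i, a i ≠ 0) {x y : ℤ → ℤ}
    {j : ℕ} (hx : ∀ i < -(j : ℤ), x i = 0) (hy : ∀ i < -(j : ℤ), y i = 0) :
    ∃ n : ℤ, trunc a x (j + 1) * trunc (astar a) y (j + 1) / (a 0 : ℚ)
      = trunc a x j * trunc (astar a) y j / (a 0 : ℚ) + n := by
  have ha' : ∀ i, astar a i ≠ 0 := fun i => ha (-i)
  obtain ⟨nx, hnx⟩ := exists_int_prodNeg_mul_trunc ha x hx j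
  obtain ⟨ny, hny⟩ := exists_int_prodNeg_mul_trunc ha' y hy j
  have ha0 : (a 0 : ℚ) ≠ 0 := by exact_mod_cast ha 0
  set u := x ((j : ℤ) + 1)
  set v := y ((j : ℤ) + 1)
  refine ⟨v * nx + u * ny + u * v * a 0 * prodNeg a j * prodNeg (astar a) j, ?_⟩
  have hastar0 : astar a 0 = a 0 := congrArg a neg_zero
  rw [trunc_succ a x hx, trunc_succ (astar a) y hy, weight_natCast_succ,
    weight_natCast_succ, astar_astar, hastar0]
  field_simp
  push_cast
  linear_combination (a 0 : ℚ) * v * hnx + (a 0 : ℚ) * u * hny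

lemma exp_two_pi_I_mul_eq_of_succ_sub_int {f : ℕ → ℚ} {J : ℕ}
    (hf : ∀ j ≥ J, ∃ n : ℤ, f (j + 1) = f j + n) :
    ∀ j ≥ J, Complex.exp (2 * Real.pi * Complex.I * (f j : ℂ))
      = Complex.exp (2 * Real.pi * Complex.I * (f J : ℂ)) := by
  intro j hj
  induction j, hj using Nat.le_induction with
  | base => rfl
  | succ k hk ih =>
    obtain ⟨n, hn⟩ := hf k hk
    rw [← ih, hn]
    push_cast
    rw [mul_add, Complex.exp_add, mul_comm _ (n : ℂ), Complex.exp_int_mul_two_pi_mul_I, mul_one]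

theorem stmt10_general (a : ℤ → ℤ) (ha : ∀ i, 2 ≤ a i)
    (x y : ℤ → ℤ)
    (hxlow : ∃ m : ℤ, ∀ i < m, x i = 0)
    (hylow : ∃ m : ℤ, ∀ i < m, y i = 0) :
    ∃ J : ℕ, ∀ j ≥ J,
      Complex.exp (2 * Real.pi * Complex.I *
        ((trunc a x j : ℚ) * (trunc (astar a) y j : ℚ) / ((a 0 : ℤ) : ℚ) : ℚ))
      = Complex.exp (2 * Real.pi * Complex.I *
        ((trunc a x J : ℚ) * (trunc (astar a) y J : ℚ) / ((a 0 : ℤ) : ℚ) : ℚ)) := by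
  obtain ⟨mx, hmx⟩ := hxlow
  obtain ⟨my, hmy⟩ := hylow
  have ha0 : ∀ i, a i ≠ 0 := fun i => by linarith [ha i]
  refine ⟨max (-mx).toNat (-my).toNat, exp_two_pi_I_mul_eq_of_succ_sub_int fun j hj => ?_⟩
  exact exists_int_trunc_mul_trunc_div_succ ha0
    (fun i hi => hmx i (by omega)) (fun i hi => hmy i (by omega))

/-- for `x ∈ Ω` and `y ∈ Ω*` (given by digit sequences with a first
nonzero entry), the sequence `z_j = exp(2πi x^{(j)} y^{(j)} / a_0)` is eventually
constant. -/
theorem stmt10 (a : ℤ → ℤ) (ha : ∀ i, 2 ≤ a i)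
    (x y : ℤ → ℤ)
    (hx : ∀ i, 0 ≤ x i ∧ x i < a i) (hxlow : ∃ m : ℤ, ∀ i < m, x i = 0)
    (hy : ∀ i, 0 ≤ y i ∧ y i < astar a i) (hylow : ∃ m : ℤ, ∀ i < m, y i = 0) :
    ∃ J : ℕ, ∀ j ≥ J,
      Complex.exp (2 * Real.pi * Complex.I *
        ((trunc a x j : ℚ) * (trunc (astar a) y j : ℚ) / ((a 0 : ℤ) : ℚ) : ℚ))
      = Complex.exp (2 * Real.pi * Complex.I *
        ((trunc a x J : ℚ) * (trunc (astar a) y J : ℚ) / ((a 0 : ℤ) : ℚ) : ℚ)) :=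
  stmt10_general a ha x y hxlow hylow
end

section
/- If Ω_a ≅ Ω_b as topological groups, then for every prime p, λ_a(p) + ρ_a(p) = λ_b(p) + ρ_b(p), where the sum is taken in ℕ ∪ {∞}. Consequently the sets of primes S_a and S_b coincide. -/
/-- `λ_a(p) = sup{ i : p^i ∣ a_0⋯a_j for some j ≥ 0 }`. -/
noncomputable def lamSN (a : ℤ → ℤ) (p : ℕ) : ℕ∞ :=
  ⨆ (n : ℕ) (_ : ∃ j : ℕ, (p : ℤ) ^ n ∣ prodPos a (j + 1)), (n : ℕ∞)

/-- `ρ_a(p) = sup{ i : p^i ∣ a_{-1}⋯a_{-k} for some k ≥ 1 }`. -/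
noncomputable def rhoSN (a : ℤ → ℤ) (p : ℕ) : ℕ∞ :=
  ⨆ (n : ℕ) (_ : ∃ k : ℕ, 1 ≤ k ∧ (p : ℤ) ^ n ∣ prodNeg a k), (n : ℕ∞)

/-- Multiplication of a supernatural number by a positive integer `r` adds `v_p(r)`
at each prime `p`. -/
noncomputable def mulSuper (r : ℕ) (l : ℕ → ℕ∞) (p : ℕ) : ℕ∞ :=
  l p + (padicValNat p r : ℕ∞)

/-!
At a prime `r` the hypotheses read `λ_a(r) + v_r(p) = λ_b(r) + v_r(q)` and
`ρ_a(r) + v_r(q) = ρ_b(r) + v_r(p)`. Adding them and cancelling the finite `v_r(pq)` gives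
`λ_a(r) + ρ_a(r) = λ_b(r) + ρ_b(r)`; and a finite shift cannot change whether a value is `∞`,
so the primes with `λ = ρ = ∞` are the same for `a` and `b`.
-/

namespace ENat

theorem eq_top_iff_of_add_natCast_eq {x y : ℕ∞} {m n : ℕ} (h : x + m = y + n) :
    x = ⊤ ↔ y = ⊤ := by
  constructor <;> rintro rfl
  · exact (WithTop.add_eq_top.1 h.symm).resolve_right (natCast_ne_top n)
  · exact (WithTop.add_eq_top.1 h).resolve_right (natCast_ne_top m)

theorem add_eq_add_of_add_natCast_eq_swap {x y x' y' : ℕ∞} {m n : ℕ}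
    (h : x + m = y + n) (h' : x' + n = y' + m) : x + x' = y + y' := by
  apply WithTop.add_right_cancel (natCast_ne_top (m + n))
  calc x + x' + ↑(m + n) = (x + m) + (x' + n) := by push_cast; ring
    _ = (y + n) + (y' + m) := by rw [h, h']
    _ = y + y' + ↑(m + n) := by push_cast; ring

end ENat

theorem stmt18_general (a b : ℤ → ℤ)
    (hiso : ∃ p q : ℕ, 0 < p ∧ 0 < q ∧
      mulSuper p (lamSN a) = mulSuper q (lamSN b) ∧
      mulSuper q (rhoSN a) = mulSuper p (rhoSN b)) :
    (∀ p : ℕ, p.Prime → lamSN a p + rhoSN a p = lamSN b p + rhoSN b p) ∧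
    Subgroup.closure {u : ℚˣ | ∃ p : ℕ, p.Prime ∧ (u : ℚ) = (p : ℚ) ∧
        lamSN a p = ⊤ ∧ rhoSN a p = ⊤}
      = Subgroup.closure {u : ℚˣ | ∃ p : ℕ, p.Prime ∧ (u : ℚ) = (p : ℚ) ∧
        lamSN b p = ⊤ ∧ rhoSN b p = ⊤} := by
  obtain ⟨p, q, -, -, hlam, hrho⟩ := hiso
  have hlam_at (r : ℕ) := congrFun hlam r
  have hrho_at (r : ℕ) := congrFun hrho r
  simp only [mulSuper] at hlam_at hrho_at
  refine ⟨fun r _ => ENat.add_eq_add_of_add_natCast_eq_swap (hlam_at r) (hrho_at r), ?_⟩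
  simp only [ENat.eq_top_iff_of_add_natCast_eq (hlam_at _),
    ENat.eq_top_iff_of_add_natCast_eq (hrho_at _)]

/-- if `Ω_a ≅ Ω_b` as topological groups — equivalently, by the assumed
classification theorem, if there are positive integers `p, q` with `pλ_a = qλ_b` and
`qρ_a = pρ_b` — then `λ_a(p) + ρ_a(p) = λ_b(p) + ρ_b(p)` for every prime `p` (sum in
`ℕ∪{∞}`), and consequently the subgroups `S_a = S_b` of `ℚ₊ˣ` generated by the primes
with `λ = ρ = ∞` coincide. -/
theorem stmt18 (a b : ℤ → ℤ) (ha : ∀ i, 2 ≤ a i) (hb : ∀ i, 2 ≤ b i)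
    (hiso : ∃ p q : ℕ, 0 < p ∧ 0 < q ∧
      mulSuper p (lamSN a) = mulSuper q (lamSN b) ∧
      mulSuper q (rhoSN a) = mulSuper p (rhoSN b)) :
    (∀ p : ℕ, p.Prime → lamSN a p + rhoSN a p = lamSN b p + rhoSN b p) ∧
    Subgroup.closure {u : ℚˣ | ∃ p : ℕ, p.Prime ∧ (u : ℚ) = (p : ℚ) ∧
        lamSN a p = ⊤ ∧ rhoSN a p = ⊤}
      = Subgroup.closure {u : ℚˣ | ∃ p : ℕ, p.Prime ∧ (u : ℚ) = (p : ℚ) ∧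
        lamSN b p = ⊤ ∧ rhoSN b p = ⊤} :=
  stmt18_general a b hiso
end
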